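/- Let U ∈ ℝ_max^{n×n} with ρ(U) ≤ 0, let U* = I ⊕ U ⊕ ⋯ ⊕ U^{n−1} with entries u*_{ij}, let g ∈ ℝ_max^n, h ∈ (ℝ ∪ {+∞})^n with U* ⊗ g ≤ h, let p ∈ ℝ_max^n, q ∈ (ℝ ∪ {+∞})^n, and suppose θ := max( (1/2)·max_{i,j}(−q_i + u*_{ij} + p_j), max_{i,j}(−h_i + u*_{ij} + p_j), max_{i,j}(−q_i + u*_{ij} + g_j) ) (maxima over indices where all summands are finite, empty maxima being −∞) is a real number. Then the set of minimizers { x ∈ ℝ^n : g ≤ x ≤ h, U ⊗ x ≤ x, f(x) = θ }, where f(x) = max( max_{i : p_i ∈ ℝ}(p_i − x_i), max_{i : q_i ∈ ℝ}(x_i − q_i) ), equals { U* ⊗ v : v ∈ ℝ^n and for every j: max(g_j, p_j − θ) ≤ v_j ≤ min_i ( −u*_{ij} + min(θ + q_i, h_i) ) }, where in the upper bound −u*_{ij} = +∞ when u*_{ij} = −∞, θ + q_i = +∞ when q_i = +∞, and the minimum over an empty set is +∞. -/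

import Mathlib

/-- Max-plus identity matrix: `0` on the diagonal, `−∞` off it. -/
noncomputable def mpId (n : ℕ) : Fin n → Fin n → EReal := fun i j => if i = j then 0 else ⊥

/-- Max-plus matrix product. -/
noncomputable def mpMul {n : ℕ} (A B : Fin n → Fin n → EReal) : Fin n → Fin n → EReal :=
  fun i j => ⨆ k, A i k + B k j

/-- Max-plus matrix powers, `A^0 = I`. -/
noncomputable def mpPow {n : ℕ} (A : Fin n → Fin n → EReal) : ℕ → Fin n → Fin n → EReal
  | 0 => mpId n
  | k + 1 => mpMul (mpPow A k) A

/-- Kleene star truncation `A* = I ⊕ A ⊕ ⋯ ⊕ A^{n−1}` (entrywise maximum). -/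
noncomputable def mpStar {n : ℕ} (A : Fin n → Fin n → EReal) : Fin n → Fin n → EReal :=
  fun i j => ⨆ k : Fin n, mpPow A (k : ℕ) i j

/-- Maximum cycle mean `ρ(A)`: the supremum, over all closed walks
`f 0, f 1, …, f k = f 0` (`k ≥ 1`), of the mean weight of the walk.  A walk using
a `−∞` arc has mean `−∞`, so this equals the maximum mean over elementary cycles
of the digraph of finite entries, and it is `−∞` when that digraph is acyclic. -/
noncomputable def rho {n : ℕ} (A : Fin n → Fin n → EReal) : EReal :=
  ⨆ (k : ℕ) (_ : 0 < k) (f : ℕ → Fin n) (_ : f k = f 0),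
    (((k : ℝ)⁻¹ : ℝ) : EReal) * ∑ i ∈ Finset.range k, A (f i) (f (i + 1))

/-!
Since `ρ(U) ≤ 0`, cutting a closed subwalk out of a walk never decreases its weight, so every
max-plus power `U^m` is bounded by `U*`, and `U ⊗ U* ≤ U*`. Consequently a real vector `x` satisfies
`U ⊗ x ≤ x` iff `x = U* ⊗ x`, and every `U* ⊗ v` satisfies it; by residuation `U* ⊗ v ≤ c` iff
`v_j ≤ min_i (−u*_ij + c_i)`. Using `u*_ij + x_j ≤ x_i`, each term of `θ` is bounded by `f(x)`
(the first one by `2 f(x)`) at every feasible `x`, so the minimizers are the feasible `x` with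
`f(x) ≤ θ`, i.e. with `p − θ ≤ x ≤ θ + q`.
-/

namespace EReal

theorem iSup_add {ι : Sort*} (f : ι → EReal) (c : EReal) :
    (⨆ i, f i) + c = ⨆ i, f i + c := by
  refine le_antisymm ?_ (iSup_le fun i => add_le_add_left (le_iSup f i) c)
  induction c with
  | bot => simp
  | coe c =>
    rw [← le_sub_iff_add_le (.inl (coe_ne_bot c)) (.inl (coe_ne_top c))]
    exact iSup_le fun i =>
      (le_sub_iff_add_le (.inl (coe_ne_bot c)) (.inl (coe_ne_top c))).2 (le_iSup (f · + c) i)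
  | top =>
    rcases eq_or_ne (⨆ i, f i) ⊥ with hf | hf
    · simp [hf]
    · obtain ⟨i, hi⟩ : ∃ i, f i ≠ ⊥ := by simpa [iSup_eq_bot] using hf
      rw [add_top_of_ne_bot hf]
      exact le_iSup_of_le i (add_top_of_ne_bot hi).ge

theorem add_iSup {ι : Sort*} (f : ι → EReal) (c : EReal) :
    c + ⨆ i, f i = ⨆ i, c + f i := by
  simp only [add_comm c, iSup_add]

theorem add_eq_add_add_sub (a b : EReal) (z : ℝ) : a + b = a + z + (b - z) := by
  rw [add_assoc, add_comm (z : EReal), sub_add_cancel]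

theorem inv_two_mul_le_of_le_add_self {a b : EReal} (h : a ≤ b + b) :
    ((2⁻¹ : ℝ) : EReal) * a ≤ b := by
  refine (mul_le_mul_of_nonneg_left h (by norm_num)).trans_eq ?_
  induction b with
  | bot => exact coe_mul_bot_of_pos (by norm_num)
  | coe b => rw [← coe_add, ← coe_mul]; congr 1; ring
  | top => exact coe_mul_top_of_pos (by norm_num)

theorem le_iInf_neg_add_iff {ι : Sort*} {s c : ι → EReal} (hs : ∀ i, s i ≠ ⊤)
    (hc : ∀ i, c i ≠ ⊥) (a : EReal) : a ≤ ⨅ i, -(s i) + c i ↔ ∀ i, s i + a ≤ c i := by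
  refine le_iInf_iff.trans (forall_congr' fun i => ?_)
  rw [add_comm, ← sub_eq_add_neg, le_sub_iff_add_le (.inr (hc i)) (.inl (hs i)), add_comm]

end EReal

section Walks

variable {n : ℕ} (A : Fin n → Fin n → EReal)

noncomputable def walkWeight (f : ℕ → Fin n) (m : ℕ) : EReal :=
  ∑ t ∈ Finset.range m, A (f t) (f (t + 1))

variable {A}

theorem walkWeight_congr {f f' : ℕ → Fin n} {m : ℕ} (h : ∀ t ≤ m, f t = f' t) :
    walkWeight A f m = walkWeight A f' m :=
  Finset.sum_congr rfl fun t ht => by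
    rw [h t (Finset.mem_range.1 ht).le, h (t + 1) (Finset.mem_range.1 ht)]

variable (A)

theorem walkWeight_succ (f : ℕ → Fin n) (m : ℕ) :
    walkWeight A f (m + 1) = walkWeight A f m + A (f m) (f (m + 1)) :=
  Finset.sum_range_succ _ _

theorem walkWeight_add (f : ℕ → Fin n) (a b : ℕ) :
    walkWeight A f (a + b) = walkWeight A f a + walkWeight A (fun t => f (a + t)) b := by
  simp only [walkWeight, Finset.sum_range_add, add_assoc]

theorem walkWeight_le_mpPow (f : ℕ → Fin n) : ∀ m, walkWeight A f m ≤ mpPow A m (f 0) (f m)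
  | 0 => by simp [walkWeight, mpPow, mpId]
  | m + 1 => by
    rw [walkWeight_succ]
    exact (add_le_add_left (walkWeight_le_mpPow f m) _).trans
      (le_iSup (fun k => mpPow A m (f 0) k + A k (f (m + 1))) (f m))

theorem mpPow_eq_iSup_walkWeight (m : ℕ) (i j : Fin n) :
    mpPow A m i j = ⨆ (f : ℕ → Fin n) (_ : f 0 = i) (_ : f m = j), walkWeight A f m := by
  refine le_antisymm ?_ (iSup_le fun f => iSup_le fun hi => iSup_le fun hj =>
    hi ▸ hj ▸ walkWeight_le_mpPow A f m)
  induction m generalizing j with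
  | zero =>
    by_cases hij : i = j
    · subst hij
      exact le_iSup_of_le (fun _ => i) (by simp [walkWeight, mpPow, mpId])
    · simp [mpPow, mpId, hij]
  | succ m ih =>
    refine iSup_le fun k => (add_le_add_left (ih k) _).trans ?_
    simp only [EReal.iSup_add, iSup_le_iff]
    intro f hf0 hfm
    have hext : walkWeight A (Function.update f (m + 1) j) m = walkWeight A f m :=
      walkWeight_congr fun t ht => Function.update_of_ne (by omega) _ _
    refine le_iSup_of_le (Function.update f (m + 1) j) <| le_iSup_of_le (by simp [hf0]) <|
      le_iSup_of_le (by simp) (le_of_eq ?_)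
    simp [walkWeight_succ, hext, hfm]

theorem add_mpPow_le_mpPow_succ (m : ℕ) (i k j : Fin n) :
    A i k + mpPow A m k j ≤ mpPow A (m + 1) i j := by
  simp only [mpPow_eq_iSup_walkWeight A m, EReal.add_iSup, iSup_le_iff]
  intro f hf0 hfm
  set f' : ℕ → Fin n := fun t => if t = 0 then i else f (t - 1)
  have hw : walkWeight A f' (1 + m) = A i k + walkWeight A f m := by
    rw [walkWeight_add]
    simp [f', walkWeight, hf0]
  have := walkWeight_le_mpPow A f' (1 + m)
  rw [hw, add_comm 1 m] at this
  simpa [f', hfm] using this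

end Walks

section Star

variable {n : ℕ} {A : Fin n → Fin n → EReal}

theorem walkWeight_nonpos_of_rho_nonpos (hrho : rho A ≤ 0) {k : ℕ} (hk : 0 < k)
    {f : ℕ → Fin n} (hf : f k = f 0) : walkWeight A f k ≤ 0 := by
  have hmean : (((k : ℝ)⁻¹ : ℝ) : EReal) * walkWeight A f k ≤ rho A :=
    le_iSup_of_le k <| le_iSup_of_le hk <| le_iSup_of_le f <| le_iSup_of_le hf le_rfl
  rcases EReal.mul_nonpos_iff.1 (hmean.trans hrho) with ⟨-, h⟩ | ⟨h, -⟩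
  · exact h
  · have : (0 : ℝ) < (k : ℝ)⁻¹ := by positivity
    exact absurd (EReal.coe_nonpos.1 h) this.not_ge

theorem exists_lt_le_apply_eq (f : ℕ → Fin n) : ∃ a b, a < b ∧ b ≤ n ∧ f a = f b := by
  obtain ⟨s, t, hst, heq⟩ :=
    Fintype.exists_ne_map_eq_of_card_lt (fun t : Fin (n + 1) => f t) (by simp)
  rcases lt_or_gt_of_ne hst with h | h
  · exact ⟨s, t, h, Nat.lt_succ_iff.1 t.2, heq⟩
  · exact ⟨t, s, h, Nat.lt_succ_iff.1 s.2, heq.symm⟩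

variable (A)

theorem exists_walkWeight_eq_cycle_add (f : ℕ → Fin n) (a d r : ℕ) (hcyc : f (a + d) = f a) :
    ∃ g : ℕ → Fin n, g 0 = f 0 ∧ g (a + r) = f (a + d + r) ∧
      walkWeight A f (a + d + r) =
        walkWeight A (fun t => f (a + t)) d + walkWeight A g (a + r) := by
  set g : ℕ → Fin n := fun t => if t ≤ a then f t else f (t + d)
  have hg : ∀ t, g (a + t) = f (a + d + t) := by
    rintro (_ | t)
    · simp [g, hcyc]
    · simp only [g, if_neg (by omega : ¬a + (t + 1) ≤ a)]
      congr 1; omega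
  refine ⟨g, by simp [g], hg r, ?_⟩
  rw [walkWeight_add A f (a + d), walkWeight_add A f a, walkWeight_add A g,
    walkWeight_congr (f := g) (f' := f) fun t ht => if_pos ht,
    show (fun t => g (a + t)) = fun t => f (a + d + t) from funext hg]
  abel

variable {A}

theorem walkWeight_le_mpStar (hrho : rho A ≤ 0) (m : ℕ) (f : ℕ → Fin n) :
    walkWeight A f m ≤ mpStar A (f 0) (f m) := by
  induction m using Nat.strong_induction_on generalizing f with
  | _ m ih =>
  by_cases hm : m < n
  · exact (walkWeight_le_mpPow A f m).trans
      (le_iSup (fun k : Fin n => mpPow A k (f 0) (f m)) ⟨m, hm⟩)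
  obtain ⟨a, b, hab, hbn, hfab⟩ := exists_lt_le_apply_eq f
  have hsplit : a + (b - a) + (m - b) = m := by omega
  obtain ⟨g, hg0, hgm, hw⟩ := exists_walkWeight_eq_cycle_add A f a (b - a) (m - b)
    (by rw [Nat.add_sub_cancel' hab.le, hfab])
  rw [hsplit] at hgm hw
  have hcyc : walkWeight A (fun t => f (a + t)) (b - a) ≤ 0 :=
    walkWeight_nonpos_of_rho_nonpos hrho (by omega) (by simp [Nat.add_sub_cancel' hab.le, hfab])
  rw [hw, ← hg0, ← hgm]
  exact (add_le_of_nonpos_left hcyc).trans (ih _ (by omega) g)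

theorem mpPow_le_mpStar (hrho : rho A ≤ 0) (m : ℕ) (i j : Fin n) :
    mpPow A m i j ≤ mpStar A i j := by
  rw [mpPow_eq_iSup_walkWeight]
  exact iSup_le fun f => iSup_le fun hi => iSup_le fun hj =>
    hi ▸ hj ▸ walkWeight_le_mpStar hrho m f

theorem add_mpStar_le_mpStar (hrho : rho A ≤ 0) (i k j : Fin n) :
    A i k + mpStar A k j ≤ mpStar A i j := by
  simp only [mpStar, EReal.add_iSup, iSup_le_iff]
  exact fun l => (add_mpPow_le_mpPow_succ A l i k j).trans (mpPow_le_mpStar hrho _ i j)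

theorem mpStar_add_le_of_add_le {x : Fin n → EReal} (hx : ∀ i j, A i j + x j ≤ x i)
    (i j : Fin n) : mpStar A i j + x j ≤ x i := by
  have hpow : ∀ m i j, mpPow A m i j + x j ≤ x i := by
    intro m
    induction m with
    | zero =>
      intro i j
      by_cases hij : i = j <;> simp [hij, mpPow, mpId]
    | succ m ih =>
      intro i j
      simp only [mpPow, mpMul, EReal.iSup_add, iSup_le_iff]
      exact fun k => (add_assoc _ _ _).trans_le ((add_le_add_right (hx k j) _).trans (ih i k))
  simp only [mpStar, EReal.iSup_add, iSup_le_iff]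
  exact fun l => hpow l i j

theorem zero_le_mpStar_self (i : Fin n) : 0 ≤ mpStar A i i :=
  le_iSup_of_le (⟨0, i.pos⟩ : Fin n) (by simp [mpPow, mpId])

theorem mpPow_ne_top (hA : ∀ i j, A i j ≠ ⊤) : ∀ m i j, mpPow A m i j ≠ ⊤
  | 0, i, j => by by_cases hij : i = j <;> simp [hij, mpPow, mpId]
  | m + 1, i, j => iSup_ne_top fun k => (EReal.add_lt_top (mpPow_ne_top hA m i k) (hA k j)).ne

theorem mpStar_ne_top (hA : ∀ i j, A i j ≠ ⊤) (i j : Fin n) : mpStar A i j ≠ ⊤ :=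
  iSup_ne_top fun k => mpPow_ne_top hA k i j

end Star

section Pseudolinear

variable {n : ℕ}

theorem exists_mpStar_mulVec_eq_iff {U : Fin n → Fin n → EReal} (hU : ∀ i j, U i j ≠ ⊤)
    (hrho : rho U ≤ 0) {lo c : Fin n → EReal} (hc : ∀ i, c i ≠ ⊥) (x : Fin n → ℝ) :
    (∃ v : Fin n → ℝ, (∀ j, lo j ≤ v j ∧ (v j : EReal) ≤ ⨅ i, -(mpStar U i j) + c i) ∧
        ∀ i, (⨆ j, mpStar U i j + (v j : EReal)) = x i) ↔
      (∀ i, lo i ≤ x i ∧ (x i : EReal) ≤ c i) ∧ ∀ i j, U i j + x j ≤ x i := by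
  simp only [EReal.le_iInf_neg_add_iff (fun i => mpStar_ne_top hU i _) hc]
  constructor
  · rintro ⟨v, hv, hx⟩
    have hvx : ∀ i, (v i : EReal) ≤ x i := fun i =>
      hx i ▸ le_iSup_of_le i (le_add_of_nonneg_left (zero_le_mpStar_self i))
    refine ⟨fun i => ⟨(hv i).1.trans (hvx i), hx i ▸ iSup_le fun j => (hv j).2 i⟩, fun i k => ?_⟩
    rw [← hx i, ← hx k, EReal.add_iSup]
    exact iSup_le fun j => le_iSup_of_le j <| (add_assoc _ _ _).symm.trans_le <|
      add_le_add_left (add_mpStar_le_mpStar hrho i k j) _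
  · rintro ⟨hbox, hsub⟩
    have hstar := mpStar_add_le_of_add_le (x := fun i => (x i : EReal)) hsub
    exact ⟨x, fun j => ⟨(hbox j).1, fun i => (hstar i j).trans (hbox i).2⟩, fun i =>
      le_antisymm (iSup_le fun j => hstar i j)
        (le_iSup_of_le i (le_add_of_nonneg_left (zero_le_mpStar_self i)))⟩

noncomputable def pseudolinearObjective (p q : Fin n → EReal) (x : Fin n → ℝ) : EReal :=
  (⨆ (i) (_ : p i ≠ ⊥), (p i - (x i : EReal))) ⊔ (⨆ (i) (_ : q i ≠ ⊤), ((x i : EReal) - q i))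

noncomputable def optimalValue (S : Fin n → Fin n → EReal) (g h p q : Fin n → EReal) : EReal :=
  ((((2 : ℝ)⁻¹ : ℝ) : EReal) *
      ⨆ (i) (j) (_ : q i ≠ ⊤) (_ : S i j ≠ ⊥) (_ : p j ≠ ⊥), (-(q i) + S i j + p j)) ⊔
    (⨆ (i) (j) (_ : h i ≠ ⊤) (_ : S i j ≠ ⊥) (_ : p j ≠ ⊥), (-(h i) + S i j + p j)) ⊔
    (⨆ (i) (j) (_ : q i ≠ ⊤) (_ : S i j ≠ ⊥) (_ : g j ≠ ⊥), (-(q i) + S i j + g j))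

theorem pseudolinearObjective_le_iff (p q : Fin n → EReal) (x : Fin n → ℝ) (t : ℝ) :
    pseudolinearObjective p q x ≤ t ↔ ∀ i, p i - t ≤ x i ∧ (x i : EReal) ≤ t + q i := by
  simp only [pseudolinearObjective, sup_le_iff, iSup_le_iff, ← forall_and]
  refine forall_congr' fun i => and_congr ?_ ?_
  · rcases eq_or_ne (p i) ⊥ with hp | hp
    · simp [hp]
    · rw [forall_prop_of_true hp, EReal.sub_le_iff_le_add (.inl (EReal.coe_ne_bot _))
        (.inl (EReal.coe_ne_top _)), EReal.sub_le_iff_le_add (.inl (EReal.coe_ne_bot _))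
        (.inl (EReal.coe_ne_top _)), add_comm]
  · rcases eq_or_ne (q i) ⊤ with hq | hq
    · simp [hq]
    · rw [forall_prop_of_true hq, EReal.sub_le_iff_le_add (.inr (EReal.coe_ne_top _))
        (.inr (EReal.coe_ne_bot _))]

theorem optimalValue_le_pseudolinearObjective {S : Fin n → Fin n → EReal}
    {g h p q : Fin n → EReal} {x : Fin n → ℝ} (hS : ∀ i j, S i j + x j ≤ x i)
    (hg : ∀ i, g i ≤ x i) (hh : ∀ i, (x i : EReal) ≤ h i) :
    optimalValue S g h p q ≤ pseudolinearObjective p q x := by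
  set F := pseudolinearObjective p q x
  have hP : ∀ j, p j ≠ ⊥ → p j - x j ≤ F := fun j hj =>
    le_sup_of_le_left (le_iSup₂_of_le (f := fun j (_ : p j ≠ ⊥) => p j - x j) j hj le_rfl)
  have hQ : ∀ i, q i ≠ ⊤ → x i - q i ≤ F := fun i hi =>
    le_sup_of_le_right
      (le_iSup₂_of_le (f := fun i (_ : q i ≠ ⊤) => (x i : EReal) - q i) i hi le_rfl)
  have hterm : ∀ i j (a b : EReal), -a + S i j + b ≤ (x i - a) + (b - x j) := fun i j a b =>
    calc -a + S i j + b = -a + (S i j + x j) + (b - x j) := by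
          rw [add_assoc, EReal.add_eq_add_add_sub (S i j) b (x j), ← add_assoc]
      _ ≤ -a + x i + (b - x j) := by gcongr; exact hS i j
      _ = (x i - a) + (b - x j) := by rw [sub_eq_add_neg (x i : EReal), add_comm (-a)]
  simp only [optimalValue, sup_le_iff, iSup_le_iff]
  refine ⟨⟨EReal.inv_two_mul_le_of_le_add_self ?_, ?_⟩, ?_⟩
  · simp only [iSup_le_iff]
    exact fun i j hqi _ hpj => (hterm i j _ _).trans (add_le_add (hQ i hqi) (hP j hpj))
  · intro i j _ _ hpj
    calc _ ≤ (x i - h i) + (p j - x j) := hterm i j _ _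
      _ ≤ 0 + (p j - x j) := by gcongr; exact EReal.sub_nonpos.2 (hh i)
      _ ≤ F := (zero_add _).trans_le (hP j hpj)
  · intro i j hqi _ _
    calc _ ≤ (x i - q i) + (g j - x j) := hterm i j _ _
      _ ≤ (x i - q i) + 0 := by gcongr; exact EReal.sub_nonpos.2 (hg j)
      _ ≤ F := (add_zero _).trans_le (hQ i hqi)

end Pseudolinear

theorem stmt10_general (n : ℕ) (U : Fin n → Fin n → EReal) (g h p q : Fin n → EReal)
    (hU : ∀ i j, U i j ≠ ⊤) (hh : ∀ i, h i ≠ ⊥)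
    (hq : ∀ i, q i ≠ ⊥)
    (hrho : rho U ≤ 0)
    (θ : EReal)
    (hθ : θ =
      ((((2 : ℝ)⁻¹ : ℝ) : EReal) *
        ⨆ (i) (j) (_ : q i ≠ ⊤) (_ : mpStar U i j ≠ ⊥) (_ : p j ≠ ⊥),
          (-(q i) + mpStar U i j + p j)) ⊔
      (⨆ (i) (j) (_ : h i ≠ ⊤) (_ : mpStar U i j ≠ ⊥) (_ : p j ≠ ⊥),
          (-(h i) + mpStar U i j + p j)) ⊔
      (⨆ (i) (j) (_ : q i ≠ ⊤) (_ : mpStar U i j ≠ ⊥) (_ : g j ≠ ⊥),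
          (-(q i) + mpStar U i j + g j)))
    (hθreal : ∃ t : ℝ, θ = (t : EReal)) :
    {x : Fin n → ℝ |
        (∀ i, g i ≤ (x i : EReal) ∧ (x i : EReal) ≤ h i ∧
          (⨆ j, U i j + (x j : EReal)) ≤ (x i : EReal)) ∧
        ((⨆ (i) (_ : p i ≠ ⊥), (p i - (x i : EReal))) ⊔
         (⨆ (i) (_ : q i ≠ ⊤), ((x i : EReal) - q i))) = θ} =
    {x : Fin n → ℝ | ∃ v : Fin n → ℝ,
        (∀ j, (g j ⊔ (p j - θ)) ≤ (v j : EReal) ∧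
          (v j : EReal) ≤ ⨅ i, (-(mpStar U i j) + ((θ + q i) ⊓ h i))) ∧
        (∀ i, (⨆ j, mpStar U i j + (v j : EReal)) = (x i : EReal))} := by
  obtain ⟨t, rfl⟩ := hθreal
  have hc : ∀ i, ((t : EReal) + q i) ⊓ h i ≠ ⊥ := fun i => by simp [hq i, hh i]
  ext x
  rw [Set.mem_ofPred_eq, Set.mem_ofPred_eq, exists_mpStar_mulVec_eq_iff hU hrho hc]
  simp only [sup_le_iff, le_inf_iff, iSup_le_iff]
  constructor
  · rintro ⟨hfeas, hval⟩
    have hbounds := (pseudolinearObjective_le_iff p q x t).1 hval.le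
    exact ⟨fun i => ⟨⟨(hfeas i).1, (hbounds i).1⟩, (hbounds i).2, (hfeas i).2.1⟩,
      fun i => (hfeas i).2.2⟩
  · rintro ⟨hbox, hsub⟩
    refine ⟨fun i => ⟨(hbox i).1.1, (hbox i).2.2, hsub i⟩, le_antisymm
      ((pseudolinearObjective_le_iff p q x t).2 fun i => ⟨(hbox i).1.2, (hbox i).2.1⟩) ?_⟩
    rw [hθ]
    exact optimalValue_le_pseudolinearObjective (mpStar_add_le_of_add_le hsub)
      (fun i => (hbox i).1.1) (fun i => (hbox i).2.2)

/-- Description of the minimizer set of the pseudolinear problem over an alcoved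
polyhedron: if `θ` (the optimal value expression) is a real number, then
`{x ∈ ℝ^n : g ≤ x ≤ h, U ⊗ x ≤ x, f(x) = θ}`
` = { U* ⊗ v : v ∈ ℝ^n, max(g j, p j − θ) ≤ v j ≤ min_i(−(U*)_{ij} + min(θ + q i, h i)) }`,
with the conventions `−(−∞) = +∞`, `θ + (+∞) = +∞`, and empty minima `+∞`. -/
theorem stmt10 (n : ℕ) (U : Fin n → Fin n → EReal) (g h p q : Fin n → EReal)
    (hU : ∀ i j, U i j ≠ ⊤) (hg : ∀ i, g i ≠ ⊤) (hh : ∀ i, h i ≠ ⊥)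
    (hp : ∀ i, p i ≠ ⊤) (hq : ∀ i, q i ≠ ⊥)
    (hrho : rho U ≤ 0) (hgh : ∀ i, (⨆ j, mpStar U i j + g j) ≤ h i)
    (θ : EReal)
    (hθ : θ =
      ((((2 : ℝ)⁻¹ : ℝ) : EReal) *
        ⨆ (i) (j) (_ : q i ≠ ⊤) (_ : mpStar U i j ≠ ⊥) (_ : p j ≠ ⊥),
          (-(q i) + mpStar U i j + p j)) ⊔
      (⨆ (i) (j) (_ : h i ≠ ⊤) (_ : mpStar U i j ≠ ⊥) (_ : p j ≠ ⊥),
          (-(h i) + mpStar U i j + p j)) ⊔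
      (⨆ (i) (j) (_ : q i ≠ ⊤) (_ : mpStar U i j ≠ ⊥) (_ : g j ≠ ⊥),
          (-(q i) + mpStar U i j + g j)))
    (hθreal : ∃ t : ℝ, θ = (t : EReal)) :
    {x : Fin n → ℝ |
        (∀ i, g i ≤ (x i : EReal) ∧ (x i : EReal) ≤ h i ∧
          (⨆ j, U i j + (x j : EReal)) ≤ (x i : EReal)) ∧
        ((⨆ (i) (_ : p i ≠ ⊥), (p i - (x i : EReal))) ⊔
         (⨆ (i) (_ : q i ≠ ⊤), ((x i : EReal) - q i))) = θ} =
    {x : Fin n → ℝ | ∃ v : Fin n → ℝ,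
        (∀ j, (g j ⊔ (p j - θ)) ≤ (v j : EReal) ∧
          (v j : EReal) ≤ ⨅ i, (-(mpStar U i j) + ((θ + q i) ⊓ h i))) ∧
        (∀ i, (⨆ j, mpStar U i j + (v j : EReal)) = (x i : EReal))} :=
  stmt10_general n U g h p q hU hh hq hrho θ hθ hθreal
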